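/- With all nine edge lengths equal to 1 (a = b = c = d = e = f = α = β = γ = 1), the pinned configuration space of (K_{3,3},l) — the space of maps p : {v₁,…,v₆} → ℝ² with p(v₄)=(0,0), p(v₁)=(1,0) and all nine distance constraints dist(p₁,p₆)=dist(p₁,p₂)=dist(p₂,p₃)=dist(p₃,p₄)=dist(p₄,p₅)=dist(p₅,p₆)=dist(p₁,p₄)=dist(p₃,p₆)=dist(p₂,p₅)=1 — is nonempty and connected. -/

import Mathlib

/-!
Put `A = {v₁, v₃, v₅}` and `B = {v₂, v₄, v₆}`: every point of `A` is at distance `1` from every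
point of `B`. In the plane two circles of radius `1` about distinct centres meet in at most two
points, so as soon as both sides take two distinct values the whole realization lies on one
rhombus `e₁, 0, y, y + e₁` with `|y| = 1`. Hence a realization has `A` collapsed to `e₁` (a torus,
`v₂, v₆` moving on the circle about `e₁`), or `B` collapsed to `0` (a torus, `v₃, v₅` moving on
the unit circle), or is a rhombus realization. Rotating `y` to `e₁` carries a rhombus realization
into the first torus, and the two tori share the realization `A ↦ e₁`, `B ↦ 0`.
-/

/-- The pinned configuration space `C_{v₄,v₁}(K_{3,3}, l)`: realizations
`p : {v₁,…,v₆} → ℝ²` (vertex `vᵢ` is index `i-1`) of the weighted graph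
`K_{3,3}` with edge lengths `a, b, c, d, e, f, α, β, γ` on the edges
`v₁v₆, v₁v₂, v₂v₃, v₃v₄, v₄v₅, v₅v₆, v₁v₄, v₃v₆, v₂v₅` respectively,
pinned by `p(v₄) = (0,0)` and `p(v₁) = (α,0)`. -/
def K33PinnedConfig (a b c d e f α β γ : ℝ) :
    Set (Fin 6 → EuclideanSpace ℝ (Fin 2)) :=
  {p | p 3 = 0 ∧ p 0 = ![α, 0] ∧
    dist (p 0) (p 5) = a ∧ dist (p 0) (p 1) = b ∧ dist (p 1) (p 2) = c ∧
    dist (p 2) (p 3) = d ∧ dist (p 3) (p 4) = e ∧ dist (p 4) (p 5) = f ∧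
    dist (p 0) (p 3) = α ∧ dist (p 2) (p 5) = β ∧ dist (p 1) (p 4) = γ}

open Metric Module

section Rhombus

variable {V : Type*} [NormedAddCommGroup V] [InnerProductSpace ℝ V] [FiniteDimensional ℝ V]

theorem eq_or_eq_add_sub_of_dist_eq (hV : finrank ℝ V = 2) {a b c z : V} {r : ℝ} (hab : a ≠ b)
    (hac : dist a c = r) (hbc : dist b c = r) (hza : dist z a = r) (hzb : dist z b = r) :
    z = c ∨ z = a + b - c := by
  by_cases hc : c = a + b - c
  · -- `c` is the midpoint of `a b`: the two circles are tangent there.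
    have hmid : midpoint ℝ a b = c := by
      rw [midpoint_eq_iff', Equiv.pointReflection_apply, vsub_eq_sub, vadd_eq_add]
      linear_combination (norm := module) hc
    have hr : r = dist a b / 2 := by
      rw [← hac, ← hmid, dist_left_midpoint, Real.norm_two, inv_mul_eq_div]
    left
    rw [← hmid]
    exact eq_midpoint_of_dist_eq_half (by rw [dist_comm, hza, hr]) (by rw [hzb, hr])
  · refine EuclideanGeometry.eq_of_dist_eq_of_dist_eq_of_finrank_eq_two hV hab hc
      (dist_comm a c ▸ hac) ?_ hza (dist_comm b c ▸ hbc) ?_ hzb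
    · rw [dist_eq_norm, show a + b - c - a = b - c by abel, ← dist_eq_norm, hbc]
    · rw [dist_eq_norm, show a + b - c - b = a - c by abel, ← dist_eq_norm, hac]

theorem subset_singleton_or_exists_rhombus_of_forall_dist_eq (hV : finrank ℝ V = 2)
    {A B : Set V} {u v : V} {r : ℝ} (hu : u ∈ A) (hv : v ∈ B)
    (hAB : ∀ a ∈ A, ∀ b ∈ B, dist a b = r) :
    A ⊆ {u} ∨ B ⊆ {v} ∨ ∃ w ∈ A, A ⊆ {u, w} ∧ B ⊆ {v, w + u - v} := by
  by_cases hA : A ⊆ {u}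
  · exact .inl hA
  obtain ⟨w, hwA, hwu⟩ := Set.not_subset.mp hA
  have hB' : B ⊆ {v, w + u - v} := fun b hb =>
    eq_or_eq_add_sub_of_dist_eq hV hwu (hAB w hwA v hv) (hAB u hu v hv)
      (dist_comm b w ▸ hAB w hwA b hb) (dist_comm b u ▸ hAB u hu b hb)
  by_cases hB : B ⊆ {v}
  · exact .inr (.inl hB)
  obtain ⟨b, hbB, hbv⟩ := Set.not_subset.mp hB
  have hb : b = w + u - v := (hB' hbB).resolve_left hbv
  refine .inr (.inr ⟨w, hwA, fun a ha => ?_, hB'⟩)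
  have := eq_or_eq_add_sub_of_dist_eq hV hbv (dist_comm b u ▸ hAB u hu b hbB)
    (dist_comm v u ▸ hAB u hu v hv) (hAB a ha b hbB) (hAB a ha v hv)
  rwa [hb, sub_add_cancel, add_sub_cancel_right] at this

end Rhombus

@[fun_prop]
theorem Continuous.cond_const {X Y : Type*} [TopologicalSpace X] [TopologicalSpace Y]
    {f g : X → Y} (β : Bool) (hf : Continuous f) (hg : Continuous g) :
    Continuous fun x => cond β (f x) (g x) := by
  cases β <;> assumption

theorem Bool.exists_cond_eq_of_mem_pair {α : Type*} {x u v : α} (h : x ∈ ({u, v} : Set α)) :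
    ∃ β : Bool, cond β v u = x := by
  rcases h with rfl | rfl
  exacts [⟨false, rfl⟩, ⟨true, rfl⟩]

theorem Bool.cond_mem_pair {α : Type*} (β : Bool) (u v : α) : cond β v u ∈ ({u, v} : Set α) := by
  cases β <;> simp

local notation "ℝ²" => EuclideanSpace ℝ (Fin 2)

local notation "𝒞" => K33PinnedConfig 1 1 1 1 1 1 1 1 1

namespace K33PinnedConfig

noncomputable section

def e₁ : ℝ² := !₂[1, 0]

theorem norm_e₁ : ‖e₁‖ = 1 := by
  simp [e₁, EuclideanSpace.norm_eq]

theorem dist_e₁_zero : dist e₁ (0 : ℝ²) = 1 := by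
  rw [dist_zero_right, norm_e₁]

theorem one_lt_rank_plane : 1 < Module.rank ℝ ℝ² := by
  rw [← finrank_eq_rank, finrank_euclideanSpace_fin]
  norm_num

def config (q₂ q₃ q₅ q₆ : ℝ²) : Fin 6 → ℝ² := ![e₁, q₂, q₃, 0, q₅, q₆]

theorem config_mem_iff {q₂ q₃ q₅ q₆ : ℝ²} :
    config q₂ q₃ q₅ q₆ ∈ 𝒞 ↔
      ∀ a ∈ ({e₁, q₃, q₅} : Set ℝ²), ∀ b ∈ ({0, q₂, q₆} : Set ℝ²), dist a b = 1 := by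
  simp [K33PinnedConfig, config, e₁, dist_comm]
  tauto

theorem config_mem_of_subset {X Y : Set ℝ²} (hXY : ∀ a ∈ X, ∀ b ∈ Y, dist a b = 1)
    {q₂ q₃ q₅ q₆ : ℝ²} (hX : {e₁, q₃, q₅} ⊆ X) (hY : {0, q₂, q₆} ⊆ Y) :
    config q₂ q₃ q₅ q₆ ∈ 𝒞 :=
  config_mem_iff.2 fun a ha b hb => hXY a (hX ha) b (hY hb)

theorem eq_config {p : Fin 6 → ℝ²} (hp : p ∈ 𝒞) : p = config (p 1) (p 2) (p 4) (p 5) := by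
  obtain ⟨h₄, h₁, -⟩ := hp
  ext1 i
  fin_cases i
  exacts [WithLp.ofLp_injective 2 h₁, rfl, rfl, h₄, rfl, rfl]

def base : Fin 6 → ℝ² := config 0 e₁ e₁ 0

theorem base_mem : base ∈ 𝒞 :=
  config_mem_iff.2 (by simp [norm_e₁])

theorem joinedIn_config_e₁_e₁ {q₂ q₆ : ℝ²} (h₂ : q₂ ∈ sphere e₁ 1) (h₆ : q₆ ∈ sphere e₁ 1) :
    JoinedIn 𝒞 (config q₂ e₁ e₁ q₆) base := by
  have hS : IsPathConnected (sphere e₁ 1 ×ˢ sphere e₁ (1 : ℝ)) :=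
    (isPathConnected_sphere one_lt_rank_plane e₁ zero_le_one).prod
      (isPathConnected_sphere one_lt_rank_plane e₁ zero_le_one)
  have h₀ : (0 : ℝ²) ∈ sphere e₁ 1 := mem_sphere_comm.1 dist_e₁_zero
  refine ((hS.joinedIn (q₂, q₆) ⟨h₂, h₆⟩ (0, 0) ⟨h₀, h₀⟩).map
    (f := fun q : ℝ² × ℝ² => config q.1 e₁ e₁ q.2) (by unfold config; fun_prop)).mono ?_
  rintro _ ⟨q, ⟨hq₂, hq₆⟩, rfl⟩
  refine config_mem_of_subset (X := {e₁}) (Y := sphere e₁ 1) ?_ (by simp) ?_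
  · rintro a rfl b hb
    rwa [dist_comm]
  · exact Set.insert_subset h₀ (Set.pair_subset hq₂ hq₆)

theorem joinedIn_config_zero_zero {q₃ q₅ : ℝ²} (h₃ : q₃ ∈ sphere 0 1) (h₅ : q₅ ∈ sphere 0 1) :
    JoinedIn 𝒞 (config 0 q₃ q₅ 0) base := by
  have hS : IsPathConnected (sphere (0 : ℝ²) 1 ×ˢ sphere (0 : ℝ²) 1) :=
    (isPathConnected_sphere one_lt_rank_plane 0 zero_le_one).prod
      (isPathConnected_sphere one_lt_rank_plane 0 zero_le_one)
  have h₀ : e₁ ∈ sphere 0 1 := dist_e₁_zero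
  refine ((hS.joinedIn (q₃, q₅) ⟨h₃, h₅⟩ (e₁, e₁) ⟨h₀, h₀⟩).map
    (f := fun q : ℝ² × ℝ² => config 0 q.1 q.2 0) (by unfold config; fun_prop)).mono ?_
  rintro _ ⟨q, ⟨hq₃, hq₅⟩, rfl⟩
  refine config_mem_of_subset (X := sphere 0 1) (Y := {0}) (fun a ha b hb => ?_) ?_ (by simp)
  · rwa [hb]
  · exact Set.insert_subset h₀ (Set.pair_subset hq₃ hq₅)

theorem dist_eq_one_of_mem_rhombus {y : ℝ²} (hy : y ∈ sphere 0 1) :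
    ∀ a ∈ ({e₁, y} : Set ℝ²), ∀ b ∈ ({0, y + e₁} : Set ℝ²), dist a b = 1 := by
  rintro a (rfl | rfl) b (rfl | rfl)
  · exact dist_e₁_zero
  · rwa [dist_comm, dist_eq_norm, add_sub_cancel_right, ← mem_sphere_zero_iff_norm]
  · exact hy
  · rw [dist_comm, dist_eq_norm, add_sub_cancel_left, norm_e₁]

theorem joinedIn_rhombus {y : ℝ²} (hy : y ∈ sphere 0 1) {q₂ q₃ q₅ q₆ : ℝ²}
    (hX : {e₁, q₃, q₅} ⊆ ({e₁, y} : Set ℝ²)) (hY : {0, q₂, q₆} ⊆ ({0, y + e₁} : Set ℝ²)) :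
    JoinedIn 𝒞 (config q₂ q₃ q₅ q₆) base := by
  obtain ⟨β₂, rfl⟩ := Bool.exists_cond_eq_of_mem_pair (x := q₂) (hY (by simp))
  obtain ⟨β₃, rfl⟩ := Bool.exists_cond_eq_of_mem_pair (x := q₃) (hX (by simp))
  obtain ⟨β₅, rfl⟩ := Bool.exists_cond_eq_of_mem_pair (x := q₅) (hX (by simp))
  obtain ⟨β₆, rfl⟩ := Bool.exists_cond_eq_of_mem_pair (x := q₆) (hY (by simp))
  let rotate (z : ℝ²) : Fin 6 → ℝ² :=
    config (cond β₂ (z + e₁) 0) (cond β₃ z e₁) (cond β₅ z e₁) (cond β₆ (z + e₁) 0)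
  have hcont : Continuous rotate := by unfold rotate config; fun_prop
  have hmaps : rotate '' sphere 0 1 ⊆ 𝒞 := by
    rintro _ ⟨z, hz, rfl⟩
    exact config_mem_of_subset (dist_eq_one_of_mem_rhombus hz)
      (Set.insert_subset (by simp) (Set.pair_subset (Bool.cond_mem_pair _ _ _)
        (Bool.cond_mem_pair _ _ _)))
      (Set.insert_subset (by simp) (Set.pair_subset (Bool.cond_mem_pair _ _ _)
        (Bool.cond_mem_pair _ _ _)))
  have he₁ : e₁ ∈ sphere (0 : ℝ²) 1 := dist_e₁_zero
  have hB (β : Bool) : cond β (e₁ + e₁) 0 ∈ sphere e₁ 1 := by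
    exact mem_sphere_comm.1 <|
      dist_eq_one_of_mem_rhombus he₁ e₁ (by simp) _ (Bool.cond_mem_pair _ _ _)
  have hrotate : rotate e₁ = config (cond β₂ (e₁ + e₁) 0) e₁ e₁ (cond β₆ (e₁ + e₁) 0) := by
    simp only [rotate, Bool.cond_self]
  refine (((isPathConnected_sphere one_lt_rank_plane 0 zero_le_one).joinedIn y hy e₁ he₁).map
    hcont |>.mono hmaps).trans ?_
  rw [hrotate]
  exact joinedIn_config_e₁_e₁ (hB β₂) (hB β₆)

theorem joinedIn_base {q₂ q₃ q₅ q₆ : ℝ²} (h : config q₂ q₃ q₅ q₆ ∈ 𝒞) :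
    JoinedIn 𝒞 (config q₂ q₃ q₅ q₆) base := by
  have hdist := config_mem_iff.1 h
  rcases subset_singleton_or_exists_rhombus_of_forall_dist_eq finrank_euclideanSpace_fin
    (Set.mem_insert _ _) (Set.mem_insert _ _) hdist with hX | hY | ⟨y, hyX, hX, hY⟩
  · obtain ⟨rfl, rfl⟩ : q₃ = e₁ ∧ q₅ = e₁ := ⟨hX (by simp), hX (by simp)⟩
    exact joinedIn_config_e₁_e₁ (mem_sphere_comm.1 (hdist _ (by simp) _ (by simp)))
      (mem_sphere_comm.1 (hdist _ (by simp) _ (by simp)))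
  · obtain ⟨rfl, rfl⟩ : q₂ = 0 ∧ q₆ = 0 := ⟨hY (by simp), hY (by simp)⟩
    exact joinedIn_config_zero_zero (hdist _ (by simp) _ (by simp)) (hdist _ (by simp) _ (by simp))
  · rw [sub_zero] at hY
    exact joinedIn_rhombus (hdist y hyX 0 (by simp)) hX hY

theorem isPathConnected_equilateral : IsPathConnected 𝒞 := by
  refine ⟨base, base_mem, fun {p} hp => ?_⟩
  obtain ⟨q₂, q₃, q₅, q₆, rfl⟩ : ∃ q₂ q₃ q₅ q₆, p = config q₂ q₃ q₅ q₆ :=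
    ⟨_, _, _, _, eq_config hp⟩
  exact (joinedIn_base hp).symm

end

end K33PinnedConfig

/-- **Example: the equilateral `(K_{3,3}, l)` has connected moduli space.**
With all nine edge lengths equal to `1`, the pinned configuration space
`C_{v₄,v₁}(K_{3,3}, l)` is nonempty and connected. -/
theorem K33_pinned_equilateral_connected :
    (K33PinnedConfig 1 1 1 1 1 1 1 1 1).Nonempty ∧
    IsConnected (K33PinnedConfig 1 1 1 1 1 1 1 1 1) :=
  ⟨⟨_, K33PinnedConfig.base_mem⟩, K33PinnedConfig.isPathConnected_equilateral.isConnected⟩
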